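/- A problem f is a cylinder (i.e., id × f ≤_sW f) if and only if for all problems g, g ≤_W f implies g ≤_sW f. -/

import Mathlib

open scoped Classical

/-! ## Basic notions of Weihrauch complexity -/

/-- The finite prefix of length `m` of a point of Baire space, as a list. -/
def pref (p : ℕ → ℕ) (m : ℕ) : List ℕ := List.ofFn (fun i : Fin m => p i)

/-- Type-2 computability of a partial function on Baire space, defined via monotone
computable word functions producing longer and longer prefixes of the output. -/
def BaireComputable (F : (ℕ → ℕ) →. (ℕ → ℕ)) : Prop :=
  ∃ ψ : List ℕ → List ℕ, Computable ψ ∧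
    (∀ u v : List ℕ, u <+: v → ψ u <+: ψ v) ∧
    ∀ p q, q ∈ F p → ∀ n, ∃ m, (ψ (pref p m))[n]? = some (q n)

/-- The interleaving pairing `⟨p,q⟩` on Baire space. -/
def pairB (p q : ℕ → ℕ) : ℕ → ℕ := fun n => if n % 2 = 0 then p (n / 2) else q (n / 2)

def evenPart (r : ℕ → ℕ) : ℕ → ℕ := fun n => r (2 * n)

def oddPart (r : ℕ → ℕ) : ℕ → ℕ := fun n => r (2 * n + 1)

/-- The `i`-th component of the countable tupling `⟨p₀,p₁,…⟩⟨i,k⟩ = pᵢ(k)`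
(using the Cantor pairing). -/
def proj (r : ℕ → ℕ) (i : ℕ) : ℕ → ℕ := fun k => r (Nat.pair i k)

/-- A represented space: a set `X` together with a surjective partial map
from Baire space onto `X`. -/
structure RepSp (X : Type*) where
  δ : (ℕ → ℕ) →. X
  surj : ∀ x : X, ∃ p, x ∈ δ p

theorem mem_part_mk {α : Type*} {D : Prop} {g : D → α} {a : α} (h : D) (e : g h = a) :
    a ∈ Part.mk D g := Part.mem_mk_iff.mpr ⟨h, e⟩

/-- The identity representation of Baire space. -/
def repBaire : RepSp (ℕ → ℕ) where
  δ := fun p => Part.some p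
  surj := fun p => ⟨p, Part.mem_some p⟩

/-- The standard representation of the natural numbers. -/
def repNat : RepSp ℕ where
  δ := fun p => Part.some (p 0)
  surj := fun n => ⟨fun _ => n, Part.mem_some n⟩

/-- `F` is a realizer of the problem `f :⊆ X ⇉ Y` (a problem is a multi-valued
function `f : X → Set Y`, whose domain is the set of `x` with `f x` nonempty). -/
def Realizes {X Y : Type*} (δX : RepSp X) (δY : RepSp Y)
    (f : X → Set Y) (F : (ℕ → ℕ) →. (ℕ → ℕ)) : Prop :=
  ∀ p x, x ∈ δX.δ p → (f x).Nonempty → ∃ q ∈ F p, ∃ y ∈ δY.δ q, y ∈ f x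

/-- Weihrauch reducibility: `f ≤_W g` iff there are computable `H, K` such that
`p ↦ H⟨p, G(K(p))⟩` realizes `f` whenever `G` realizes `g`. -/
def WRed {X Y Z W : Type*} (δX : RepSp X) (δY : RepSp Y) (δZ : RepSp Z) (δW : RepSp W)
    (f : X → Set Y) (g : Z → Set W) : Prop :=
  ∃ H K : (ℕ → ℕ) →. (ℕ → ℕ), BaireComputable H ∧ BaireComputable K ∧
    ∀ G : (ℕ → ℕ) →. (ℕ → ℕ), Realizes δZ δW g G →
      Realizes δX δY f
        (fun p => (K p).bind fun r => (G r).bind fun q => H (pairB p q))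

/-- Strong Weihrauch reducibility: `f ≤_sW g` iff there are computable `H, K`
such that `H ∘ G ∘ K` realizes `f` whenever `G` realizes `g`. -/
def SWRed {X Y Z W : Type*} (δX : RepSp X) (δY : RepSp Y) (δZ : RepSp Z) (δW : RepSp W)
    (f : X → Set Y) (g : Z → Set W) : Prop :=
  ∃ H K : (ℕ → ℕ) →. (ℕ → ℕ), BaireComputable H ∧ BaireComputable K ∧
    ∀ G : (ℕ → ℕ) →. (ℕ → ℕ), Realizes δZ δW g G →
      Realizes δX δY f (fun p => (K p).bind fun r => (G r).bind fun q => H q)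

/-- Weihrauch equivalence. -/
def WEquiv {X Y Z W : Type*} (δX : RepSp X) (δY : RepSp Y) (δZ : RepSp Z) (δW : RepSp W)
    (f : X → Set Y) (g : Z → Set W) : Prop :=
  WRed δX δY δZ δW f g ∧ WRed δZ δW δX δY g f

/-- Strong Weihrauch equivalence. -/
def SWEquiv {X Y Z W : Type*} (δX : RepSp X) (δY : RepSp Y) (δZ : RepSp Z) (δW : RepSp W)
    (f : X → Set Y) (g : Z → Set W) : Prop :=
  SWRed δX δY δZ δW f g ∧ SWRed δZ δW δX δY g f

/-- The identity problem on Baire space. -/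
def idProblem : (ℕ → ℕ) → Set (ℕ → ℕ) := fun p => {p}

/-! ## Constructions on representations and problems -/

/-- Representation of the product of two represented spaces. -/
def prodRep {X Z : Type*} (δX : RepSp X) (δZ : RepSp Z) : RepSp (X × Z) where
  δ := fun r => (δX.δ (evenPart r)).bind fun x => (δZ.δ (oddPart r)).map fun z => (x, z)
  surj := by
    intro xz
    obtain ⟨p, hp⟩ := δX.surj xz.1
    obtain ⟨q, hq⟩ := δZ.surj xz.2
    have he : evenPart (pairB p q) = p := by
      funext n
      have h1 : (2 * n) % 2 = 0 := by omega
      have h2 : (2 * n) / 2 = n := by omega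
      simp [evenPart, pairB, h1, h2]
    have ho : oddPart (pairB p q) = q := by
      funext n
      have h1 : ¬((2 * n + 1) % 2 = 0) := by omega
      have h2 : (2 * n + 1) / 2 = n := by omega
      simp [oddPart, pairB, h1, h2]
    refine ⟨pairB p q, Part.mem_bind_iff.mpr ⟨xz.1, by rw [he]; exact hp,
      (Part.mem_map_iff _).mpr ⟨xz.2, by rw [ho]; exact hq, rfl⟩⟩⟩

/-- The product `f × g` of two problems. -/
def prodProblem {X Y Z W : Type*} (f : X → Set Y) (g : Z → Set W) :
    X × Z → Set (Y × W) :=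
  fun xz => f xz.1 ×ˢ g xz.2

/-- Representation of the disjoint union of two represented spaces. -/
def sumRep {X Z : Type*} (δX : RepSp X) (δZ : RepSp Z) : RepSp (X ⊕ Z) where
  δ := fun r =>
    if r 0 = 0 then (δX.δ fun n => r (n + 1)).map Sum.inl
    else if r 0 = 1 then (δZ.δ fun n => r (n + 1)).map Sum.inr
    else Part.none
  surj := by
    rintro (x | z)
    · obtain ⟨p, hp⟩ := δX.surj x
      refine ⟨fun n => Nat.casesOn n 0 p, ?_⟩
      show Sum.inl x ∈ (δX.δ p).map Sum.inl
      exact (Part.mem_map_iff _).mpr ⟨x, hp, rfl⟩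
    · obtain ⟨p, hp⟩ := δZ.surj z
      refine ⟨fun n => Nat.casesOn n 1 p, ?_⟩
      show Sum.inr z ∈ (δZ.δ p).map Sum.inr
      exact (Part.mem_map_iff _).mpr ⟨z, hp, rfl⟩

/-- The coproduct `f ⊔ g` of two problems. -/
def coprodProblem {X Y Z W : Type*} (f : X → Set Y) (g : Z → Set W) :
    X ⊕ Z → Set (Y ⊕ W)
  | Sum.inl x => Sum.inl '' f x
  | Sum.inr z => Sum.inr '' g z

/-- The meet `f ⊓ g` of two problems. -/
def meetProblem {X Y Z W : Type*} (f : X → Set Y) (g : Z → Set W) :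
    X × Z → Set (Y ⊕ W) :=
  fun xz => Sum.inl '' f xz.1 ∪ Sum.inr '' g xz.2

/-- Representation of the space of sequences `X^ℕ` via the countable tupling. -/
noncomputable def seqRep {X : Type*} (δX : RepSp X) : RepSp (ℕ → X) where
  δ := fun r => Part.mk (∀ i : ℕ, ∃ x, x ∈ δX.δ (proj r i))
    (fun h i => Classical.choose (h i))
  surj := by
    intro x
    choose p hp using fun i => δX.surj (x i)
    refine ⟨fun m => p (Nat.unpair m).1 (Nat.unpair m).2, ?_⟩
    have hproj : ∀ i, proj (fun m => p (Nat.unpair m).1 (Nat.unpair m).2) i = p i := by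
      intro i; funext k; simp [proj]
    have hdom : ∀ i : ℕ, ∃ y, y ∈ δX.δ (proj (fun m => p (Nat.unpair m).1 (Nat.unpair m).2) i) :=
      fun i => ⟨x i, by rw [hproj i]; exact hp i⟩
    refine mem_part_mk hdom ?_
    funext i
    exact Part.mem_unique (Classical.choose_spec (hdom i)) (by rw [hproj i]; exact hp i)

/-- The parallelization `f̂` of a problem. -/
def parallelProblem {X Y : Type*} (f : X → Set Y) : (ℕ → X) → Set (ℕ → Y) :=
  fun x => {y | ∀ i, y i ∈ f (x i)}

/-- Representation of the finite power `Xⁿ` via the countable tupling. -/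
noncomputable def finProdRep (n : ℕ) {X : Type*} (δX : RepSp X) : RepSp (Fin n → X) where
  δ := fun r => Part.mk (∀ i : Fin n, ∃ x, x ∈ δX.δ (proj r i))
    (fun h i => Classical.choose (h i))
  surj := by
    intro x
    choose p hp using fun i => δX.surj (x i)
    classical
    refine ⟨fun m => if h : (Nat.unpair m).1 < n then p ⟨_, h⟩ (Nat.unpair m).2 else 0, ?_⟩
    have hproj : ∀ i : Fin n,
        proj (fun m => if h : (Nat.unpair m).1 < n then p ⟨_, h⟩ (Nat.unpair m).2 else 0) i
          = p i := by
      intro i; funext k; simp [proj, i.isLt]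
    have hdom : ∀ i : Fin n, ∃ y, y ∈ δX.δ
        (proj (fun m => if h : (Nat.unpair m).1 < n then p ⟨_, h⟩ (Nat.unpair m).2 else 0) i) :=
      fun i => ⟨x i, by rw [hproj i]; exact hp i⟩
    refine mem_part_mk hdom ?_
    funext i
    exact Part.mem_unique (Classical.choose_spec (hdom i)) (by rw [hproj i]; exact hp i)

/-- The `n`-fold product `fⁿ` of a problem with itself. -/
def finProdProblem (n : ℕ) {X Y : Type*} (f : X → Set Y) :
    (Fin n → X) → Set (Fin n → Y) :=
  fun x => {y | ∀ i, y i ∈ f (x i)}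

/-- Representation of the space `X*` of words over `X`. -/
noncomputable def starRep {X : Type*} (δX : RepSp X) : RepSp (Σ n : ℕ, Fin n → X) where
  δ := fun r => Part.mk (∀ i : Fin (r 0), ∃ x, x ∈ δX.δ (proj (fun m => r (m + 1)) i))
    (fun h => ⟨r 0, fun i => Classical.choose (h i)⟩)
  surj := by
    rintro ⟨n, x⟩
    choose p hp using fun i => δX.surj (x i)
    classical
    have hproj : ∀ i : Fin n,
        proj (fun m' => if h : (Nat.unpair m').1 < n then p ⟨_, h⟩ (Nat.unpair m').2 else 0) i
          = p i := by
      intro i; funext k; simp [proj, i.isLt]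
    have hdom : ∀ i : Fin n, ∃ y, y ∈ δX.δ
        (proj (fun m' => if h : (Nat.unpair m').1 < n then p ⟨_, h⟩ (Nat.unpair m').2 else 0) i) :=
      fun i => ⟨x i, by rw [hproj i]; exact hp i⟩
    refine ⟨fun m => Nat.casesOn m n
      (fun m' => if h : (Nat.unpair m').1 < n then p ⟨_, h⟩ (Nat.unpair m').2 else 0),
      Part.mem_mk_iff.mpr ⟨hdom, ?_⟩⟩
    have hx : (fun i : Fin n => Classical.choose (hdom i)) = x := funext fun i =>
      Part.mem_unique (Classical.choose_spec (hdom i)) (by rw [hproj i]; exact hp i)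
    exact congrArg (Sigma.mk n) hx

/-- The finite parallelization `f*` of a problem. -/
def starProblem {X Y : Type*} (f : X → Set Y) :
    (Σ n : ℕ, Fin n → X) → Set (Σ n : ℕ, Fin n → Y) :=
  fun x => {y | ∃ e : x.1 = y.1, ∀ i : Fin x.1, y.2 (Fin.cast e i) ∈ f (x.2 i)}

/-- Representation of a countable disjoint union of represented spaces. -/
def csumRep {Z : ℕ → Type*} (δZ : ∀ i, RepSp (Z i)) : RepSp (Σ i, Z i) where
  δ := fun r => ((δZ (r 0)).δ (fun n => r (n + 1))).map fun z => ⟨r 0, z⟩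
  surj := by
    rintro ⟨i, z⟩
    obtain ⟨p, hp⟩ := (δZ i).surj z
    exact ⟨fun n => Nat.casesOn n i p, (Part.mem_map_iff _).mpr ⟨z, hp, rfl⟩⟩

/-- The countable coproduct `⊔ᵢ gᵢ` of a sequence of problems. -/
def csumProblem {Z W : ℕ → Type*} (g : ∀ i, Z i → Set (W i)) :
    (Σ i, Z i) → Set (Σ i, W i) :=
  fun x => Sigma.mk x.1 '' g x.1 x.2

/-! ## Limits and jumps -/

/-- The limit map on Baire space, as a (single-valued) problem:
`lim⟨p₀,p₁,…⟩` is the pointwise limit of the sequence `(pₙ)ₙ`. -/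
def limProblem : (ℕ → ℕ) → Set (ℕ → ℕ) :=
  fun r => {q | ∀ n, ∃ N, ∀ m, N ≤ m → proj r m n = q n}

/-- The limit map on Baire space as a partial (single-valued) function. -/
noncomputable def limP : (ℕ → ℕ) →. (ℕ → ℕ) :=
  fun r => Part.mk (∀ n, ∃ N, ∀ m, N ≤ m → proj r m n = proj r N n)
    (fun h n => proj r (Classical.choose (h n)) n)

/-- The jump `(X′, δ′)` of a represented space: `δ′ := δ ∘ lim`. -/
noncomputable def jumpRep {X : Type*} (δ : RepSp X) : RepSp X where
  δ := fun p => (limP p).bind δ.δ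
  surj := by
    intro x
    obtain ⟨p, hp⟩ := δ.surj x
    refine ⟨fun m => p (Nat.unpair m).2, Part.mem_bind_iff.mpr ⟨p, ?_, hp⟩⟩
    have hproj : ∀ m, proj (fun m => p (Nat.unpair m).2) m = p := by
      intro m; funext k; simp [proj]
    have hdom : ∀ n, ∃ N, ∀ m, N ≤ m →
        proj (fun m => p (Nat.unpair m).2) m n = proj (fun m => p (Nat.unpair m).2) N n :=
      fun n => ⟨0, fun m _ => by rw [hproj m, hproj 0]⟩
    refine mem_part_mk hdom ?_
    funext n
    rw [hproj]

/-! ## Choice problems -/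

/-- The representation of subsets of `ℕ` by enumerations of their complements:
`p` is a name of `A` iff `p` enumerates (via `p m = n + 1`) exactly the `n ∉ A`. -/
def enumNegRep : RepSp (Set ℕ) where
  δ := fun p => Part.some {n | ∀ m, p m ≠ n + 1}
  surj := by
    intro S
    by_cases h : Sᶜ.Nonempty
    · obtain ⟨f, hf⟩ := (Set.to_countable Sᶜ).exists_eq_range h
      refine ⟨fun m => f m + 1, Part.mem_some_iff.mpr ?_⟩
      ext n
      simp only [Set.mem_setOf_eq]
      constructor
      · intro hn m hm
        have hfm : f m ∈ Sᶜ := by rw [hf]; exact ⟨m, rfl⟩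
        have hfmn : f m = n := by omega
        rw [hfmn] at hfm
        exact hfm hn
      · intro hn
        by_contra hS
        have hmem : n ∈ Sᶜ := hS
        rw [hf] at hmem
        obtain ⟨m, hm⟩ := hmem
        exact hn m (by omega)
    · refine ⟨fun _ => 0, Part.mem_some_iff.mpr ?_⟩
      have hS : S = Set.univ := by
        rw [← compl_compl S, Set.not_nonempty_iff_eq_empty.mp h, Set.compl_empty]
      rw [hS]
      ext n
      simp

/-- Choice on the natural numbers: given (a name of) a nonempty set `A ⊆ ℕ`,
find an element of `A`. -/
def CNat : Set ℕ → Set ℕ := fun A => A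

/-- Choice on the finite set `{0, …, k-1}`. -/
def CFin (k : ℕ) : Set ℕ → Set ℕ := fun A => {n | n ∈ A ∧ A ⊆ Set.Iio k}

/-- The limited principle of omniscience as a problem. -/
noncomputable def LPOProblem : (ℕ → ℕ) → Set ℕ :=
  fun p => {if ∃ k, p k = 0 then 1 else 0}


/-- Restriction of a problem on Baire space to a set `A`. -/
def restrictProblem (F : (ℕ → ℕ) → Set (ℕ → ℕ)) (A : Set (ℕ → ℕ)) :
    (ℕ → ℕ) → Set (ℕ → ℕ) :=
  fun p => {q | q ∈ F p ∧ p ∈ A}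

/-- A problem is a fractal if it has a representative on Baire space all of whose
restrictions to clopen sets meeting its domain are Weihrauch equivalent to it. -/
def Fractal {X Y : Type*} (δX : RepSp X) (δY : RepSp Y) (f : X → Set Y) : Prop :=
  ∃ F : (ℕ → ℕ) → Set (ℕ → ℕ),
    WEquiv repBaire repBaire δX δY F f ∧
    ∀ A : Set (ℕ → ℕ), IsClopen A → (A ∩ {p | (F p).Nonempty}).Nonempty →
      WEquiv repBaire repBaire repBaire repBaire (restrictProblem F A) F

/-- A problem `f` is densely realized if for every name `p` of an admissible instance
the set of names of solutions is dense in the domain of the output representation. -/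
def DenselyRealized {X Y : Type*} (δX : RepSp X) (δY : RepSp Y) (f : X → Set Y) : Prop :=
  ∀ p, ∀ x ∈ δX.δ p, (f x).Nonempty →
    {q : ℕ → ℕ | (δY.δ q).Dom} ⊆ closure {q : ℕ → ℕ | ∃ y ∈ δY.δ q, y ∈ f x}

/-- Turing reducibility on Baire space: `a` is computable from `b`. -/
def TRed (a b : ℕ → ℕ) : Prop := ∃ F, BaireComputable F ∧ a ∈ F b

/-- The two-point space `{p, q}` represented by the identity. -/
def pqRep (p q : ℕ → ℕ) : RepSp {r : ℕ → ℕ // r = p ∨ r = q} where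
  δ := fun r => Part.mk (r = p ∨ r = q) (fun h => ⟨r, h⟩)
  surj := fun x => ⟨x.1, Part.mem_mk_iff.mpr ⟨x.2, rfl⟩⟩

/-- The problem `m_A` associated with a set `A ⊆ ℕ`. -/
noncomputable def mProblem (p q : ℕ → ℕ) (A : Set ℕ) :
    ℕ → Set {r : ℕ → ℕ // r = p ∨ r = q} :=
  fun n => {y | y.1 = if n ∈ A then p else q}

/-- The join `A ⊕ B` of two sets of natural numbers. -/
def mJoin (A B : Set ℕ) : Set ℕ :=
  {k | (k % 2 = 0 ∧ k / 2 ∈ A) ∨ (k % 2 = 1 ∧ k / 2 ∈ B)}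

/-- The cardinality `#f` of a problem: the supremum of the cardinalities of sets
`M ⊆ dom f` whose images under `f` are pairwise disjoint. -/
noncomputable def problemCard {X Y : Type} (f : X → Set Y) : Cardinal :=
  sSup {c | ∃ M : Set X, (∀ x ∈ M, (f x).Nonempty) ∧ M.PairwiseDisjoint f ∧
    c = Cardinal.mk M}

/-- Computability of a problem: it has a computable realizer. -/
def ComputableProblem {X Y : Type*} (δX : RepSp X) (δY : RepSp Y) (f : X → Set Y) : Prop :=
  ∃ F, BaireComputable F ∧ Realizes δX δY f F

/-- The minimum function on Baire space. -/
def minProblem : (ℕ → ℕ) → Set ℕ :=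
  fun p => {n | n ∈ Set.range p ∧ ∀ m, n ≤ p m}

/-- The complementary minimum function `minᶜ`. -/
def mincProblem : (ℕ → ℕ) → Set ℕ :=
  fun p => {n | (∀ m, p m ≠ n) ∧ ∀ j, j < n → ∃ m, p m = j}

/-- The maximum function on Baire space (defined on bounded sequences). -/
def maxProblem : (ℕ → ℕ) → Set ℕ :=
  fun p => {n | n ∈ Set.range p ∧ ∀ m, p m ≤ n}

/-!
If `g ≤_W f` via `H, K`, then `g ≤_sW id × f` via `H` and `p ↦ ⟨p, K p⟩`: the `id`-component
carries the original input through the oracle to `H`, so `H` no longer needs direct access to it.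
For a cylinder, composing with `id × f ≤_sW f` then gives `g ≤_sW f`. Conversely `id × f ≤_W f`
holds for every `f`, so if `≤_W` and `≤_sW` agree below `f`, then `f` is a cylinder.
-/

@[simp]
lemma length_pref (p : ℕ → ℕ) (m : ℕ) : (pref p m).length = m := by
  simp [pref]

lemma getElem?_pref (p : ℕ → ℕ) {i m : ℕ} (h : i < m) : (pref p m)[i]? = some (p i) := by
  simp [pref, h]

lemma pref_prefix_iff {q : ℕ → ℕ} {n : ℕ} {L : List ℕ} :
    pref q n <+: L ↔ ∀ i < n, L[i]? = some (q i) := by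
  simp [List.prefix_iff_getElem?, pref]

lemma pref_prefix_pref (p : ℕ → ℕ) {m m' : ℕ} (h : m ≤ m') : pref p m <+: pref p m' :=
  pref_prefix_iff.2 fun _ hi => getElem?_pref p (hi.trans_le h)

lemma List.IsPrefix.getElem?_eq_some {α : Type*} {u v : List α} (h : u <+: v) {i : ℕ} {a : α}
    (hi : u[i]? = some a) : v[i]? = some a := by
  obtain ⟨t, rfl⟩ := h
  rwa [List.getElem?_append_left (List.getElem?_eq_some_iff.1 hi).1]

lemma List.IsPrefix.getElem?_eq {α : Type*} {u v : List α} (h : u <+: v) {i : ℕ}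
    (hi : i < u.length) : v[i]? = u[i]? :=
  (h.getElem?_eq_some (List.getElem?_eq_getElem hi)).trans (List.getElem?_eq_getElem hi).symm

lemma eventually_pref_prefix {L : ℕ → List ℕ} (hL : ∀ m m', m ≤ m' → L m <+: L m')
    {q : ℕ → ℕ} (h : ∀ n, ∃ m, (L m)[n]? = some (q n)) (n : ℕ) :
    ∀ᶠ m in Filter.atTop, pref q n <+: L m := by
  simp_rw [pref_prefix_iff]
  refine (Filter.eventually_all_finite (Set.finite_Iio n)).2 fun i _ => ?_
  obtain ⟨m, hm⟩ := h i
  exact Filter.eventually_atTop.2 ⟨m, fun m' hm' => (hL m m' hm').getElem?_eq_some hm⟩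

def pairList (u w : List ℕ) : List ℕ :=
  (List.range (2 * min u.length w.length)).map fun n =>
    if n % 2 = 0 then u[n / 2]?.getD 0 else w[n / 2]?.getD 0

lemma primrec₂_pairList : Primrec₂ pairList := by
  show Primrec fun uw : List ℕ × List ℕ => pairList uw.1 uw.2
  have hdiv : Primrec fun x : (List ℕ × List ℕ) × ℕ => x.2 / 2 :=
    Primrec.nat_div.comp Primrec.snd (Primrec.const 2)
  refine (Primrec.list_map (Primrec.list_range.comp (Primrec.nat_mul.comp (Primrec.const 2)
      (Primrec.nat_min.comp (Primrec.list_length.comp Primrec.fst)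
        (Primrec.list_length.comp Primrec.snd))))
    (Primrec.ite (Primrec.eq.comp (Primrec.nat_mod.comp Primrec.snd (Primrec.const 2))
        (Primrec.const 0))
      (Primrec.option_getD.comp
        (Primrec.list_getElem?.comp (Primrec.fst.comp Primrec.fst) hdiv) (Primrec.const 0))
      (Primrec.option_getD.comp
        (Primrec.list_getElem?.comp (Primrec.snd.comp Primrec.fst) hdiv)
        (Primrec.const 0))).to₂).of_eq fun _ => rfl

lemma pairList_prefix_pairList {u u' w w' : List ℕ} (hu : u <+: u') (hw : w <+: w') :
    pairList u w <+: pairList u' w' := by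
  refine List.prefix_iff_getElem?.2 fun i hi => ?_
  simp only [pairList, List.length_map, List.length_range] at hi
  have hi' : i < 2 * min u'.length w'.length := by
    have := hu.length_le; have := hw.length_le; omega
  simp only [pairList, List.getElem?_map, List.getElem?_range hi',
    List.getElem_map, List.getElem_range, Option.map_some]
  rw [hu.getElem?_eq (by omega), hw.getElem?_eq (by omega)]

lemma pref_pairB (p r : ℕ → ℕ) (k : ℕ) :
    pref (pairB p r) (2 * k) = pairList (pref p k) (pref r k) := by
  refine List.ext_getElem? fun n => ?_
  by_cases hn : n < 2 * k
  · rw [getElem?_pref _ hn, pairList, List.getElem?_map, List.getElem?_range (by simpa using hn),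
      Option.map_some]
    unfold pairB
    split <;> simp [getElem?_pref _ (show n / 2 < k by omega)]
  · rw [List.getElem?_eq_none (by simpa using hn),
      List.getElem?_eq_none (by simp [pairList]; omega)]

namespace BaireComputable

lemma bind {F G : (ℕ → ℕ) →. (ℕ → ℕ)} (hF : BaireComputable F) (hG : BaireComputable G) :
    BaireComputable fun p => (F p).bind fun q => G q := by
  obtain ⟨ψF, cF, mF, aF⟩ := hF
  obtain ⟨ψG, cG, mG, aG⟩ := hG
  refine ⟨ψG ∘ ψF, cG.comp cF, fun u v h => mG _ _ (mF _ _ h), fun p q hq n => ?_⟩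
  obtain ⟨r, hr, hqr⟩ := Part.mem_bind_iff.1 hq
  obtain ⟨m₁, hm₁⟩ := aG r q hqr n
  obtain ⟨m, hm⟩ :=
    (eventually_pref_prefix (fun _ _ h => mF _ _ (pref_prefix_pref p h)) (aF p r hr) m₁).exists
  exact ⟨m, (mG _ _ hm).getElem?_eq_some hm₁⟩

/-- The bound on `h` lets `b * (i + 1)` input symbols determine `i + 1` output symbols. -/
lemma comp_primrec {h : ℕ → ℕ} (hh : Primrec h) {b : ℕ} (hb : ∀ i, h i < b * (i + 1)) :
    BaireComputable fun p => Part.some (p ∘ h) := by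
  have hb0 : 0 < b := Nat.pos_of_ne_zero fun h0 => by simpa [h0] using hb 0
  have hbound : ∀ {L i}, i < L / b → h i < L := fun {L i} hi =>
    (hb i).trans_le ((Nat.mul_le_mul_left b hi).trans (Nat.mul_div_le L b))
  refine ⟨fun u => (List.range (u.length / b)).map fun i => u[h i]?.getD 0, ?_, ?_, ?_⟩
  · exact (Primrec.list_map (Primrec.list_range.comp
        (Primrec.nat_div.comp Primrec.list_length (Primrec.const b)))
      (Primrec.option_getD.comp (Primrec.list_getElem?.comp Primrec.fst (hh.comp Primrec.snd))
        (Primrec.const 0)).to₂).to_comp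
  · intro u v huv
    refine List.prefix_iff_getElem?.2 fun i hi => ?_
    simp only [List.length_map, List.length_range] at hi
    have hi' : i < v.length / b := hi.trans_le (Nat.div_le_div_right huv.length_le)
    simp [hi', huv.getElem?_eq (hbound hi)]
  · intro p q hq n
    obtain rfl := Part.mem_some_iff.1 hq
    have hn : n < (b * (n + 1)) / b := by rw [Nat.mul_div_cancel_left _ hb0]; omega
    exact ⟨b * (n + 1), by simp [hn, getElem?_pref p (hbound (by simpa using hn))]⟩

lemma map_pairB {F : (ℕ → ℕ) →. (ℕ → ℕ)} (hF : BaireComputable F) :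
    BaireComputable fun p => (F p).map (pairB p) := by
  obtain ⟨ψ, cψ, mψ, aψ⟩ := hF
  refine ⟨fun u => pairList u (ψ u), primrec₂_pairList.to_comp.comp Computable.id cψ,
    fun u v h => pairList_prefix_pairList h (mψ _ _ h), fun p q hq n => ?_⟩
  obtain ⟨r, hr, rfl⟩ := (Part.mem_map_iff _).1 hq
  have hψ := eventually_pref_prefix (fun _ _ h => mψ _ _ (pref_prefix_pref p h)) (aψ p r hr) (n + 1)
  obtain ⟨m, hm, hrm⟩ := ((Filter.eventually_ge_atTop (n + 1)).and hψ).exists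
  refine ⟨m, (pairList_prefix_pairList (pref_prefix_pref p hm) hrm).getElem?_eq_some ?_⟩
  rw [← pref_pairB, getElem?_pref _ (by omega)]

end BaireComputable

@[simp]
lemma evenPart_pairB (p q : ℕ → ℕ) : evenPart (pairB p q) = p := by
  funext n
  simp [evenPart, pairB]

@[simp]
lemma oddPart_pairB (p q : ℕ → ℕ) : oddPart (pairB p q) = q := by
  funext n
  simp only [oddPart, pairB, Nat.mul_add_mod_self_left, Nat.one_mod, one_ne_zero, if_false]
  congr 1
  omega

lemma pairB_evenPart_oddPart (t : ℕ → ℕ) : pairB (evenPart t) (oddPart t) = t := by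
  funext n
  unfold pairB evenPart oddPart
  split <;> congr 1 <;> omega

lemma baireComputable_oddPart : BaireComputable fun t => Part.some (oddPart t) :=
  BaireComputable.comp_primrec (b := 2) (Primrec.nat_add.comp
    (Primrec.nat_mul.comp (Primrec.const 2) Primrec.id) (Primrec.const 1)) (fun i => by omega)

lemma mem_prodRep_iff {X Z : Type*} {δX : RepSp X} {δZ : RepSp Z} {r : ℕ → ℕ} {x : X}
    {z : Z} :
    (x, z) ∈ (prodRep δX δZ).δ r ↔ x ∈ δX.δ (evenPart r) ∧ z ∈ δZ.δ (oddPart r) := by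
  simp [prodRep, Part.mem_bind_iff, Part.mem_map_iff]

section Reductions

variable {X Y Z W V U : Type*} {δX : RepSp X} {δY : RepSp Y} {δZ : RepSp Z} {δW : RepSp W}
  {δV : RepSp V} {δU : RepSp U} {f : X → Set Y} {g : Z → Set W} {h : V → Set U}

lemma SWRed.wRed (hfg : SWRed δX δY δZ δW f g) : WRed δX δY δZ δW f g := by
  obtain ⟨H, K, hH, hK, hred⟩ := hfg
  refine ⟨fun t => H (oddPart t), K, ?_, hK, fun G hG => ?_⟩
  · simpa only [Part.bind_some] using baireComputable_oddPart.bind hH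
  · simpa only [oddPart_pairB] using hred G hG

lemma SWRed.trans (hfg : SWRed δX δY δZ δW f g) (hgh : SWRed δZ δW δV δU g h) :
    SWRed δX δY δV δU f h := by
  obtain ⟨H₁, K₁, hH₁, hK₁, hred₁⟩ := hfg
  obtain ⟨H₂, K₂, hH₂, hK₂, hred₂⟩ := hgh
  refine ⟨fun q => (H₂ q).bind fun a => H₁ a, fun p => (K₁ p).bind fun r => K₂ r,
    hH₂.bind hH₁, hK₁.bind hK₂, fun G hG => ?_⟩
  simpa only [Part.bind_assoc] using hred₁ _ (hred₂ G hG)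

end Reductions

section Cylinder

variable {X Y Z W : Type*} {δX : RepSp X} {δY : RepSp Y} {δZ : RepSp Z} {δW : RepSp W}
  {f : X → Set Y} {g : Z → Set W}

/-- The guard `evenPart t = p` lets a consumer of this realizer's output `oddPart t` recover
`t = ⟨p, oddPart t⟩` without knowing that `r` names an instance of `f`. -/
lemma Realizes.of_prodProblem_idProblem {G : (ℕ → ℕ) →. (ℕ → ℕ)}
    (hG : Realizes (prodRep repBaire δX) (prodRep repBaire δY) (prodProblem idProblem f) G)
    (p : ℕ → ℕ) :
    Realizes δX δY f fun r =>
      (G (pairB p r)).bind fun t => Part.mk (evenPart t = p) fun _ => oddPart t := by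
  rintro r x hx ⟨y, hy⟩
  obtain ⟨t, ht, ⟨a, y'⟩, hname, rfl, hy'⟩ :=
    hG (pairB p r) (p, x) (by simpa [mem_prodRep_iff, repBaire] using hx) ⟨(p, y), rfl, hy⟩
  obtain ⟨ha, hy'name⟩ := mem_prodRep_iff.1 hname
  rw [repBaire, Part.mem_some_iff] at ha
  exact ⟨oddPart t, Part.mem_bind_iff.2 ⟨t, ht, mem_part_mk ha.symm rfl⟩, y', hy'name, hy'⟩

lemma WRed.sWRed_prodProblem_idProblem (hgf : WRed δZ δW δX δY g f) :
    SWRed δZ δW (prodRep repBaire δX) (prodRep repBaire δY) g (prodProblem idProblem f) := by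
  obtain ⟨H, K, hH, hK, hred⟩ := hgf
  refine ⟨H, fun p => (K p).map (pairB p), hH, hK.map_pairB, fun G hG p z hz hne => ?_⟩
  obtain ⟨q, hq, w, hw, hwg⟩ := hred _ (hG.of_prodProblem_idProblem p) p z hz hne
  simp only [Part.mem_bind_iff, Part.mem_mk_iff] at hq
  obtain ⟨r, hr, _, ⟨t, ht, hpt, rfl⟩, hq⟩ := hq
  rw [← hpt, pairB_evenPart_oddPart] at hq
  exact ⟨q, Part.mem_bind_iff.2 ⟨pairB p r, (Part.mem_map_iff _).2 ⟨r, hr, rfl⟩,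
    Part.mem_bind_iff.2 ⟨t, ht, hq⟩⟩, w, hw, hwg⟩

lemma baireComputable_pairB_evenPart_evenPart_oddPart :
    BaireComputable fun t => Part.some (pairB (evenPart (evenPart t)) (oddPart t)) := by
  have hh : Primrec fun n : ℕ => if n % 2 = 0 then 2 * n else n :=
    Primrec.ite (Primrec.eq.comp (Primrec.nat_mod.comp Primrec.id (Primrec.const 2))
      (Primrec.const 0)) (Primrec.nat_mul.comp (Primrec.const 2) Primrec.id) Primrec.id
  have key (t : ℕ → ℕ) : pairB (evenPart (evenPart t)) (oddPart t) =
      t ∘ fun n => if n % 2 = 0 then 2 * n else n := by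
    funext n
    unfold pairB evenPart oddPart
    split <;> simp only [Function.comp_apply, *, if_true, if_false] <;> congr 1 <;> omega
  simpa only [key] using BaireComputable.comp_primrec hh (b := 2) fun i => by split <;> omega

variable (δX δY f) in
lemma prodProblem_idProblem_wRed :
    WRed (prodRep repBaire δX) (prodRep repBaire δY) δX δY (prodProblem idProblem f) f := by
  refine ⟨fun t => Part.some (pairB (evenPart (evenPart t)) (oddPart t)),
    fun r => Part.some (oddPart r), baireComputable_pairB_evenPart_evenPart_oddPart,
    baireComputable_oddPart, ?_⟩
  rintro G hG p ⟨a, x⟩ hname ⟨⟨_, y⟩, -, hy⟩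
  obtain ⟨ha, hx⟩ := mem_prodRep_iff.1 hname
  rw [repBaire, Part.mem_some_iff] at ha
  obtain ⟨q, hq, y', hy'name, hy'⟩ := hG (oddPart p) x hx ⟨y, hy⟩
  refine ⟨pairB a q, ?_, (a, y'), ?_, rfl, hy'⟩
  · exact Part.mem_bind_iff.2 ⟨_, Part.mem_some _, Part.mem_bind_iff.2 ⟨q, hq, by simp [ha]⟩⟩
  · simpa [mem_prodRep_iff, repBaire] using hy'name

end Cylinder

/-- `f` is a cylinder iff `≤_W`-reducibility to `f` coincides with
`≤_sW`-reducibility to `f`. -/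
theorem cylinder_iff (X Y : Type) (δX : RepSp X) (δY : RepSp Y) (f : X → Set Y) :
    SWRed (prodRep repBaire δX) (prodRep repBaire δY) δX δY
        (prodProblem idProblem f) f ↔
    ∀ (Z W : Type) (δZ : RepSp Z) (δW : RepSp W) (g : Z → Set W),
      WRed δZ δW δX δY g f ↔ SWRed δZ δW δX δY g f :=
  ⟨fun hcyl _ _ _ _ _ => ⟨fun hgf => hgf.sWRed_prodProblem_idProblem.trans hcyl, SWRed.wRed⟩,
    fun h => (h _ _ _ _ _).1 (prodProblem_idProblem_wRed δX δY f)⟩
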